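/- Under these assumptions, the group homology H_1(G, X) (which is the Tate cohomology group H^{-2}(G, X)) is generated as an abelian group by the homology classes of the 1-cycles [τ] ⊗ (p(L) − p0(L)) for p ∈ S∖{p0} and τ ∈ G_p. -/

import Mathlib

set_option linter.unusedSectionVars false
set_option synthInstance.maxHeartbeats 1000000
set_option maxHeartbeats 1000000

/-!
STATEMENT 3: Let `L/K` be a Galois extension of number fields with group `G`, `S` a finite
set of places of `K` containing the archimedean and ramified places, with a fixed choice of
a place `p(L)` of `L` above each `p ∈ S` (with decomposition group `G_p` the stabilizer of
`p(L)`), and suppose some finite `p0 ∈ S` satisfies `G_{p0} = G`.  Then the group homology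
`H₁(G, X) = H⁻²(G, X)` is generated, as an abelian group, by the classes of the
bar-resolution 1-cycles `[τ] ⊗ (p(L) − p0(L))` for `p ∈ S ∖ {p0}` and `τ ∈ G_p`.

Here `Y` is the free abelian group on the set `S_L` of places of `L` above `S`, and `X` is
the kernel of the augmentation map `Y → ℤ`.
-/

/-! Bar-resolution description of group homology `H₁(G, A)` (Tate cohomology `H⁻²(G, A)`):
1-chains are elements of `G →₀ A` (the symbol `[σ] ⊗ a` being `single σ a`), the degree-1
differential is `[σ] ⊗ a ↦ σ • a - a`, and the degree-2 differential is
`[σ, τ] ⊗ a ↦ [σ] ⊗ τ • a - [στ] ⊗ a + [τ] ⊗ a`. -/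

namespace BarH1

variable (G : Type) [Group G] (A : Type) [AddCommGroup A] [DistribMulAction G A]

/-- The boundary map `(G →₀ A) →+ A` of the bar resolution in degree 1:
`[σ] ⊗ a ↦ σ • a - a`. -/
noncomputable def d1 : (G →₀ A) →+ A :=
  Finsupp.liftAddHom fun σ =>
    (DistribMulAction.toAddMonoidHom A σ : A →+ A) - AddMonoidHom.id A

/-- 1-cycles of the bar resolution. -/
noncomputable def cycles : AddSubgroup (G →₀ A) := (d1 G A).ker

/-- 1-boundaries: the image of the degree-2 bar differential
`[σ, τ] ⊗ a ↦ [σ] ⊗ τ • a - [στ] ⊗ a + [τ] ⊗ a`. -/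
noncomputable def boundaries : AddSubgroup (G →₀ A) :=
  AddSubgroup.closure {x | ∃ (σ τ : G) (a : A),
    x = Finsupp.single σ (τ • a) - Finsupp.single (σ * τ) a + Finsupp.single τ a}

/-- Group homology `H₁(G, A)` (the Tate cohomology group `H⁻²(G, A)`). -/
noncomputable def H1 :=
  cycles G A ⧸ (boundaries G A).addSubgroupOf (cycles G A)

noncomputable instance : AddCommGroup (H1 G A) :=
  QuotientAddGroup.Quotient.addCommGroup _

open scoped Classical in
/-- The homology class of a 1-cycle (junk value `0` if the argument is not a cycle). -/
noncomputable def H1mk (f : G →₀ A) : H1 G A :=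
  if hf : f ∈ cycles G A then QuotientAddGroup.mk ⟨f, hf⟩ else 0

end BarH1

namespace TateNF

open NumberField IsDedekindDomain

variable (K L : Type) [Field K] [Field L] [NumberField K] [NumberField L]
  [Algebra K L] [IsGalois K L] [FiniteDimensional K L]

/-- The ring homomorphism `𝓞 L → 𝓞 L` obtained by restricting `σ : L ≃ₐ[K] L` to the
ring of integers. -/
noncomputable def galRes (σ : L ≃ₐ[K] L) : (𝓞 L) →+* (𝓞 L) :=
  ((galRestrict (𝓞 K) K L (𝓞 L) σ).toAlgHom : (𝓞 L) →+* (𝓞 L))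

lemma galRes_apply (σ : L ≃ₐ[K] L) (x : 𝓞 L) :
    galRes K L σ x = galRestrict (𝓞 K) K L (𝓞 L) σ x := rfl

lemma galRes_comp (σ τ : L ≃ₐ[K] L) :
    (galRes K L σ).comp (galRes K L τ) = galRes K L (σ * τ) := by
  ext x
  simp [galRes_apply, map_mul, AlgEquiv.mul_apply]

lemma galRes_one : galRes K L 1 = RingHom.id (𝓞 L) := by
  ext x
  simp [galRes_apply, map_one]

/-- The natural action of the Galois group on the finite places of `L`:
`σ` sends a prime `P` of `𝓞 L` to its image `σ(P)` (the preimage of `P` under `σ⁻¹`). -/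
noncomputable instance : MulAction (L ≃ₐ[K] L) (HeightOneSpectrum (𝓞 L)) where
  smul σ v :=
    { asIdeal := Ideal.comap (galRes K L σ⁻¹) v.asIdeal
      isPrime := Ideal.comap_isPrime _ _
      ne_bot := fun h => v.ne_bot <| by
        have hsurj : Function.Surjective (galRes K L σ⁻¹) :=
          (galRestrict (𝓞 K) K L (𝓞 L) σ⁻¹).surjective
        rw [← Ideal.map_comap_of_surjective _ hsurj v.asIdeal, h, Ideal.map_bot] }
  one_smul v := by
    ext x
    show x ∈ Ideal.comap (galRes K L 1⁻¹) v.asIdeal ↔ _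
    rw [inv_one, galRes_one]
    simp
  mul_smul σ τ v := by
    ext x
    show x ∈ Ideal.comap (galRes K L (σ * τ)⁻¹) v.asIdeal ↔
      x ∈ Ideal.comap (galRes K L σ⁻¹) (Ideal.comap (galRes K L τ⁻¹) v.asIdeal)
    rw [Ideal.comap_comap, galRes_comp, mul_inv_rev]

lemma smul_asIdeal (σ : L ≃ₐ[K] L) (v : HeightOneSpectrum (𝓞 L)) :
    (σ • v).asIdeal = Ideal.comap (galRes K L σ⁻¹) v.asIdeal := rfl

/-- The Galois action on finite places of `L` commutes with restriction to `K`. -/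
lemma comap_algebraMap_smul (σ : L ≃ₐ[K] L) (v : HeightOneSpectrum (𝓞 L)) :
    ((σ • v).asIdeal).comap (algebraMap (𝓞 K) (𝓞 L)) =
      v.asIdeal.comap (algebraMap (𝓞 K) (𝓞 L)) := by
  rw [smul_asIdeal, Ideal.comap_comap]
  congr 1
  ext x
  simp [galRes_apply]

/-- A place of a number field `F`: either an infinite place or a finite place
(a nonzero prime of the ring of integers). -/
abbrev PlaceOf (F : Type) [Field F] [NumberField F] : Type :=
  NumberField.InfinitePlace F ⊕ HeightOneSpectrum (𝓞 F)

/-- `LiesAbove P p` means that the place `P` of `L` lies above the place `p` of `K`. -/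
def LiesAbove : PlaceOf L → PlaceOf K → Prop
  | .inl w, .inl u => w.comap (algebraMap K L) = u
  | .inr P, .inr p => P.asIdeal.comap (algebraMap (𝓞 K) (𝓞 L)) = p.asIdeal
  | _, _ => False

/-- The natural action of the Galois group on the places of `L`. -/
noncomputable instance : MulAction (L ≃ₐ[K] L) (PlaceOf L) where
  smul σ := Sum.map (fun w => σ • w) (fun v => σ • v)
  one_smul := by
    rintro (w | v)
    · show Sum.inl ((1 : L ≃ₐ[K] L) • w) = Sum.inl w
      rw [one_smul]
    · show Sum.inr ((1 : L ≃ₐ[K] L) • v) = Sum.inr v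
      rw [one_smul]
  mul_smul σ τ := by
    rintro (w | v)
    · show Sum.inl ((σ * τ) • w) = Sum.inl (σ • τ • w)
      rw [mul_smul]
    · show Sum.inr ((σ * τ) • v) = Sum.inr (σ • τ • v)
      rw [mul_smul]

lemma smul_inl (σ : L ≃ₐ[K] L) (w : NumberField.InfinitePlace L) :
    σ • (Sum.inl w : PlaceOf L) = Sum.inl (σ • w) := rfl

lemma smul_inr (σ : L ≃ₐ[K] L) (v : HeightOneSpectrum (𝓞 L)) :
    σ • (Sum.inr v : PlaceOf L) = Sum.inr (σ • v) := rfl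

lemma liesAbove_smul (σ : L ≃ₐ[K] L) (P : PlaceOf L) (p : PlaceOf K)
    (h : LiesAbove K L P p) : LiesAbove K L (σ • P) p := by
  obtain w | v := P <;> obtain u | q := p
  · rw [smul_inl]
    show (σ • w).comap (algebraMap K L) = u
    rw [NumberField.InfinitePlace.comap_smul,
      show (RingHom.comp (↑σ.symm) (algebraMap K L)) = algebraMap K L from
        RingHom.ext fun x => σ.symm.commutes x]
    exact h
  · exact (h : False).elim
  · exact (h : False).elim
  · rw [smul_inr]
    show ((σ • v).asIdeal).comap (algebraMap (𝓞 K) (𝓞 L)) = q.asIdeal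
    rw [comap_algebraMap_smul]
    exact h

variable (S : Finset (PlaceOf K))

/-- The set `S_L` of places of `L` lying above the places in `S`. -/
def SL : Set (PlaceOf L) := {P | ∃ p ∈ S, LiesAbove K L P p}

/-- The Galois action on `S_L`. -/
noncomputable instance : MulAction (L ≃ₐ[K] L) ↥(SL K L S) where
  smul σ P := ⟨σ • (P : PlaceOf L), by
    obtain ⟨p, hp, h⟩ := P.2
    exact ⟨p, hp, liesAbove_smul K L σ _ _ h⟩⟩
  one_smul P := Subtype.ext (one_smul _ (P : PlaceOf L))
  mul_smul σ τ P := Subtype.ext (mul_smul σ τ (P : PlaceOf L))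

/-- The decomposition group of a place `P ∈ S_L`: the stabilizer of `P` under the Galois
action on the places of `L`. -/
noncomputable def DecompGrp (P : ↥(SL K L S)) : Subgroup (L ≃ₐ[K] L) :=
  MulAction.stabilizer (L ≃ₐ[K] L) (P : PlaceOf L)

attribute [local instance] Finsupp.comapSMul Finsupp.comapMulAction Finsupp.comapDistribMulAction

/-- `Y`: the free abelian group on `S_L`, with the Galois group permuting the basis. -/
abbrev Y : Type := ↥(SL K L S) →₀ ℤ

/-- The augmentation map `Y → ℤ`, sending every place in `S_L` to `1`. -/
noncomputable def augY : Y K L S →+ ℤ :=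
  Finsupp.liftAddHom fun _ => AddMonoidHom.id ℤ

lemma augY_smul (σ : L ≃ₐ[K] L) (f : Y K L S) : augY K L S (σ • f) = augY K L S f := by
  show augY K L S (Finsupp.mapDomain (fun P => σ • P) f) = _
  simp only [augY, Finsupp.liftAddHom_apply]
  exact Finsupp.sum_mapDomain_index (fun _ => rfl) (fun _ _ _ => rfl)

/-- `X`: the kernel of the augmentation map `Y → ℤ`, as a subgroup of `Y`. -/
noncomputable def Xsub : AddSubgroup (Y K L S) := (augY K L S).ker

lemma mem_Xsub (f : Y K L S) : f ∈ Xsub K L S ↔ augY K L S f = 0 := Iff.rfl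

/-- The Galois action on `X`. -/
noncomputable instance : DistribMulAction (L ≃ₐ[K] L) ↥(Xsub K L S) where
  smul σ x := ⟨σ • (x : Y K L S), by
    rw [mem_Xsub, augY_smul]
    exact (mem_Xsub K L S _).mp x.2⟩
  one_smul x := Subtype.ext (one_smul _ (x : Y K L S))
  mul_smul σ τ x := Subtype.ext (mul_smul σ τ (x : Y K L S))
  smul_zero σ := Subtype.ext (smul_zero (A := Y K L S) σ)
  smul_add σ x y := Subtype.ext (smul_add σ (x : Y K L S) (y : Y K L S))

/-- The element `P - P'` of `X`, for places `P, P' ∈ S_L`. -/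
noncomputable def Xgen (P P' : ↥(SL K L S)) : ↥(Xsub K L S) :=
  ⟨Finsupp.single P 1 - Finsupp.single P' 1, by
    rw [mem_Xsub, map_sub]
    simp [augY]⟩

end TateNF

/-!
Write `ω₀ = p₀(L)`: it is fixed by all of `G`, and `X` is free on the `P - ω₀`, `P ≠ ω₀`.
As `G` acts transitively on the places above a given place, every `P ∈ S_L` is `ρ_P • r_P`
with `r_P` one of the chosen places `p(L)`, and `r_{σP} = r_P`. The map
`Ψ : X → C₁(G, X)`, `P - ω₀ ↦ [ρ_P] ⊗ (r_P - ω₀)`, is a partial contracting homotopy: with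
`e = r_P - ω₀` and `τ = ρ_{σP}⁻¹ σ ρ_P ∈ G_{r_P}`,
`[σ] ⊗ (P - ω₀) - Ψ(∂([σ] ⊗ (P - ω₀))) = ∂([σ|ρ_P] ⊗ e) - ∂([ρ_{σP}|τ] ⊗ e) + [τ] ⊗ e`.
Hence every chain `c` is congruent to `Ψ(∂c)` modulo boundaries and the cycles `[τ] ⊗ e`,
and `Ψ(∂c) = 0` when `c` is a cycle.
-/

namespace BarH1

open Finsupp

variable {G A : Type} [Group G] [AddCommGroup A] [DistribMulAction G A]

lemma d1_single (σ : G) (a : A) : d1 G A (single σ a) = σ • a - a :=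
  liftAddHom_apply_single _ σ a

lemma single_sub_single_add_single_mem_boundaries (σ τ : G) (a : A) :
    single σ (τ • a) - single (σ * τ) a + single τ a ∈ boundaries G A :=
  AddSubgroup.subset_closure ⟨σ, τ, a, rfl⟩

lemma boundaries_le_cycles : boundaries G A ≤ cycles G A := by
  rw [boundaries, AddSubgroup.closure_le]
  rintro _ ⟨σ, τ, a, rfl⟩
  change d1 G A _ = 0
  rw [map_add, map_sub, d1_single, d1_single, d1_single, mul_smul]
  abel

lemma H1mk_of_mem {f : G →₀ A} (hf : f ∈ cycles G A) :
    H1mk G A f = QuotientAddGroup.mk ⟨f, hf⟩ :=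
  dif_pos hf

lemma H1mk_zero : H1mk G A 0 = 0 :=
  H1mk_of_mem (zero_mem _)

lemma H1mk_add {f g : G →₀ A} (hf : f ∈ cycles G A) (hg : g ∈ cycles G A) :
    H1mk G A (f + g) = H1mk G A f + H1mk G A g := by
  rw [H1mk_of_mem hf, H1mk_of_mem hg, H1mk_of_mem (add_mem hf hg)]
  rfl

lemma H1mk_neg {f : G →₀ A} (hf : f ∈ cycles G A) : H1mk G A (-f) = -H1mk G A f := by
  rw [H1mk_of_mem hf, H1mk_of_mem (neg_mem hf)]
  rfl

lemma H1mk_eq_zero_of_mem_boundaries {f : G →₀ A} (hf : f ∈ boundaries G A) :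
    H1mk G A f = 0 := by
  rw [H1mk_of_mem (boundaries_le_cycles hf)]
  exact (QuotientAddGroup.eq_zero_iff _).2 (AddSubgroup.mem_addSubgroupOf.2 hf)

theorem closure_image_H1mk_eq_top {T : Set (G →₀ A)} (hT : T ⊆ cycles G A)
    (hcycles : cycles G A ≤ boundaries G A ⊔ AddSubgroup.closure T) :
    AddSubgroup.closure (H1mk G A '' T) = ⊤ := by
  have hTc : AddSubgroup.closure T ≤ cycles G A := (AddSubgroup.closure_le _).2 hT
  have hmem : ∀ g ∈ AddSubgroup.closure T,
      H1mk G A g ∈ AddSubgroup.closure (H1mk G A '' T) := by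
    intro g hg
    induction hg using AddSubgroup.closure_induction with
    | mem g hg => exact AddSubgroup.subset_closure ⟨g, hg, rfl⟩
    | zero => rw [H1mk_zero]; exact zero_mem _
    | add g g' hg hg' ih ih' => rw [H1mk_add (hTc hg) (hTc hg')]; exact add_mem ih ih'
    | neg g hg ih => rw [H1mk_neg (hTc hg)]; exact neg_mem ih
  refine eq_top_iff.2 fun x _ => ?_
  induction x using QuotientAddGroup.induction_on with
  | H c =>
    obtain ⟨b, hb, g, hg, hbg⟩ := AddSubgroup.mem_sup.1 (hcycles c.2)
    have hc : (c : G →₀ A) = b + g := hbg.symm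
    rw [← H1mk_of_mem c.2, hc, H1mk_add (boundaries_le_cycles hb) (hTc hg),
      H1mk_eq_zero_of_mem_boundaries hb, zero_add]
    exact hmem g hg

end BarH1

noncomputable section AugmentationKernel

open Finsupp

variable {G : Type} [Group G] (Ω : Type) [MulAction G Ω]

attribute [local instance] Finsupp.comapSMul Finsupp.comapMulAction Finsupp.comapDistribMulAction

-- For `Ω = S_L` this is definitionally `Xsub K L S` with the same `G`-action, and
-- `diff P P'` below is `Xgen K L S P P'`.
def augmentationKernel : AddSubgroup (Ω →₀ ℤ) :=
  (liftAddHom fun _ => AddMonoidHom.id ℤ).ker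

namespace augmentationKernel

lemma mem_iff (f : Ω →₀ ℤ) : f ∈ augmentationKernel Ω ↔ f.sum (fun _ n => n) = 0 := Iff.rfl

lemma smul_mem (σ : G) {f : Ω →₀ ℤ} (hf : f ∈ augmentationKernel Ω) :
    σ • f ∈ augmentationKernel Ω := by
  rw [mem_iff, comapSMul_def, sum_mapDomain_index (fun _ => rfl) (fun _ _ _ => rfl)]
  exact hf

instance : DistribMulAction G (augmentationKernel Ω) where
  smul σ x := ⟨σ • (x : Ω →₀ ℤ), smul_mem Ω σ x.2⟩
  one_smul x := Subtype.ext (one_smul _ (x : Ω →₀ ℤ))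
  mul_smul σ τ x := Subtype.ext (mul_smul σ τ (x : Ω →₀ ℤ))
  smul_zero σ := Subtype.ext (smul_zero (A := Ω →₀ ℤ) σ)
  smul_add σ x y := Subtype.ext (smul_add σ (x : Ω →₀ ℤ) (y : Ω →₀ ℤ))

variable {Ω}

def diff (ω ω' : Ω) : augmentationKernel Ω :=
  ⟨single ω 1 - single ω' 1, by simp [mem_iff, sum_sub_index]⟩

lemma smul_diff (σ : G) (ω ω' : Ω) : σ • diff ω ω' = diff (σ • ω) (σ • ω') :=
  Subtype.ext <| by
    change σ • (single ω 1 - single ω' 1 : Ω →₀ ℤ) = _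
    rw [smul_sub, comapSMul_single, comapSMul_single]
    rfl

lemma diff_self (ω : Ω) : diff ω ω = 0 :=
  Subtype.ext (sub_self _)

lemma closure_range_diff_eq_top (ω₀ : Ω) :
    AddSubgroup.closure (Set.range fun ω => diff ω ω₀) = ⊤ := by
  refine eq_top_iff.2 fun a _ => ?_
  have ha : a = (a : Ω →₀ ℤ).sum fun ω n => n • diff ω ω₀ := by
    apply Subtype.ext
    have hsum : (a : Ω →₀ ℤ).sum (fun _ n => n) = 0 := a.2
    rw [← AddSubgroup.coe_subtype, map_finsuppSum]
    simp only [map_zsmul, AddSubgroup.coe_subtype, diff, smul_sub, sum_sub, smul_single_one]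
    rw [sum_single, ← single_sum, hsum, single_zero, sub_zero]
  rw [ha]
  exact AddSubmonoidClass.finsuppSum_mem _ _ _ fun ω _ =>
    AddSubgroup.zsmul_mem _ (AddSubgroup.subset_closure (Set.mem_range_self ω)) _

end augmentationKernel

end AugmentationKernel

section OrbitSection

open MulAction

variable {G Ω ι : Type} [Group G] [MulAction G Ω]

lemma exists_orbit_section (r : ι → Ω) (hr : ∀ ω, ∃ i, ∃ g : G, g • r i = ω) :
    ∃ (idx : Ω → ι) (ρ : Ω → G), (∀ (g : G) ω, idx (g • ω) = idx ω) ∧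
      ∀ ω, ρ ω • r (idx ω) = ω := by
  choose i g hg using hr
  let q ω := (Quotient.mk (orbitRel G Ω) ω).out
  have hq : ∀ ω, ∃ h : G, h • ω = q ω := fun ω => Quotient.mk_out (s := orbitRel G Ω) ω
  choose h hh using hq
  refine ⟨fun ω => i (q ω), fun ω => (h ω)⁻¹ * g (q ω), fun σ ω => ?_, fun ω => ?_⟩
  · simp only [q, Quotient.sound (s := orbitRel G Ω) (mem_orbit ω σ)]
  · rw [mul_smul, hg, inv_smul_eq_iff, hh]

end OrbitSection

noncomputable section Contraction

open Finsupp MulAction BarH1 augmentationKernel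

attribute [local instance] Finsupp.comapSMul Finsupp.comapMulAction Finsupp.comapDistribMulAction

variable {G Ω ι : Type} [Group G] [MulAction G Ω] {ω₀ : Ω} (r : ι → Ω)

variable (G ω₀) in
def stabilizerCycles : Set (G →₀ augmentationKernel Ω) :=
  {x | ∃ i, ∃ τ ∈ stabilizer G (r i), x = single τ (diff (r i) ω₀)}

lemma stabilizerCycles_subset_cycles (hω₀ : ∀ g : G, g • ω₀ = ω₀) :
    stabilizerCycles G ω₀ r ⊆ cycles G (augmentationKernel Ω) := by
  rintro _ ⟨i, τ, hτ, rfl⟩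
  change d1 _ _ _ = 0
  rw [d1_single, smul_diff, mem_stabilizer_iff.1 hτ, hω₀, sub_self]

variable (idx : Ω → ι) (ρ : Ω → G)

variable (ω₀) in
def contraction : augmentationKernel Ω →+ (G →₀ augmentationKernel Ω) :=
  (liftAddHom fun ω => zmultiplesHom _ (single (ρ ω) (diff (r (idx ω)) ω₀))).comp
    (augmentationKernel Ω).subtype

variable {r idx ρ} (hω₀ : ∀ g : G, g • ω₀ = ω₀) (hidx : ∀ (g : G) ω, idx (g • ω) = idx ω)
  (hρ : ∀ ω, ρ ω • r (idx ω) = ω)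

include hω₀ hρ in
lemma contraction_diff (ω : Ω) :
    contraction ω₀ r idx ρ (diff ω ω₀) = single (ρ ω) (diff (r (idx ω)) ω₀) := by
  have hr₀ : r (idx ω₀) = ω₀ := by
    rw [← inv_smul_eq_iff.2 (hρ ω₀).symm, hω₀]
  change liftAddHom _ (single ω 1 - single ω₀ 1 : Ω →₀ ℤ) = _
  rw [map_sub, liftAddHom_apply_single, liftAddHom_apply_single, hr₀, diff_self,
    single_zero, zmultiplesHom_apply, one_zsmul, zmultiplesHom_apply, zsmul_zero, sub_zero]

include hω₀ hidx hρ in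
lemma single_diff_sub_contraction_mem (σ : G) (ω : Ω) :
    single σ (diff ω ω₀) - contraction ω₀ r idx ρ (d1 _ _ (single σ (diff ω ω₀))) ∈
      boundaries G _ ⊔ AddSubgroup.closure (stabilizerCycles G ω₀ r) := by
  set e := diff (r (idx ω)) ω₀
  set τ := (ρ (σ • ω))⁻¹ * (σ * ρ ω)
  have hσω : ρ (σ • ω) • r (idx ω) = σ • ω := by rw [← hidx σ ω]; exact hρ _
  have hτ : τ ∈ stabilizer G (r (idx ω)) := by
    rw [mem_stabilizer_iff, mul_smul, mul_smul, hρ]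
    exact inv_smul_eq_iff.2 hσω.symm
  have hρe : ρ ω • e = diff ω ω₀ := by rw [smul_diff, hρ, hω₀]
  have hτe : τ • e = e := by rw [smul_diff, mem_stabilizer_iff.1 hτ, hω₀]
  have hb₁ := single_sub_single_add_single_mem_boundaries σ (ρ ω) e
  have hb₂ := single_sub_single_add_single_mem_boundaries (ρ (σ • ω)) τ e
  rw [hρe] at hb₁
  rw [hτe, mul_inv_cancel_left] at hb₂
  have hg : single τ e ∈ stabilizerCycles G ω₀ r := ⟨idx ω, τ, hτ, rfl⟩
  have key : single σ (diff ω ω₀) - contraction ω₀ r idx ρ (d1 _ _ (single σ (diff ω ω₀))) =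
      (single σ (diff ω ω₀) - single (σ * ρ ω) e + single (ρ ω) e) -
        (single (ρ (σ • ω)) e - single (σ * ρ ω) e + single τ e) + single τ e := by
    rw [d1_single, smul_diff, hω₀, map_sub, contraction_diff hω₀ hρ, contraction_diff hω₀ hρ,
      hidx]
    abel
  rw [key]
  exact add_mem (sub_mem (AddSubgroup.mem_sup_left hb₁) (AddSubgroup.mem_sup_left hb₂))
    (AddSubgroup.mem_sup_right (AddSubgroup.subset_closure hg))

include hω₀ hidx hρ in
lemma sub_contraction_d1_mem (c : G →₀ augmentationKernel Ω) :
    c - contraction ω₀ r idx ρ (d1 _ _ c) ∈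
      boundaries G _ ⊔ AddSubgroup.closure (stabilizerCycles G ω₀ r) := by
  induction c using Finsupp.induction_linear with
  | zero => simp only [map_zero, sub_zero]; exact zero_mem _
  | add c c' hc hc' => rw [map_add, map_add, add_sub_add_comm]; exact add_mem hc hc'
  | single σ a =>
    have ha : a ∈ AddSubgroup.closure (Set.range fun ω => diff ω ω₀) :=
      closure_range_diff_eq_top ω₀ ▸ AddSubgroup.mem_top a
    induction ha using AddSubgroup.closure_induction with
    | mem _ hmem =>
      obtain ⟨ω, rfl⟩ := hmem
      exact single_diff_sub_contraction_mem hω₀ hidx hρ σ ω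
    | zero => simp only [single_zero, map_zero, sub_zero]; exact zero_mem _
    | add a a' _ _ h h' =>
      rw [single_add, map_add, map_add, add_sub_add_comm]; exact add_mem h h'
    | neg a _ h => rw [single_neg, map_neg, map_neg, neg_sub_neg, ← neg_sub]; exact neg_mem h

include hω₀ in
theorem closure_H1mk_stabilizerCycles_eq_top (hr : ∀ ω, ∃ i, ∃ g : G, g • r i = ω) :
    AddSubgroup.closure (H1mk G _ '' stabilizerCycles G ω₀ r) = ⊤ := by
  obtain ⟨idx, ρ, hidx, hρ⟩ := exists_orbit_section r hr
  refine closure_image_H1mk_eq_top (stabilizerCycles_subset_cycles r hω₀) fun c hc => ?_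
  have hc : d1 _ _ c = 0 := hc
  simpa only [hc, map_zero, sub_zero] using sub_contraction_d1_mem hω₀ hidx hρ c

end Contraction

namespace TateNF

open NumberField IsDedekindDomain
open scoped Pointwise

variable (K L : Type) [Field K] [Field L] [NumberField K] [NumberField L]
  [Algebra K L] [IsGalois K L] [FiniteDimensional K L]

lemma galRes_eq_toRingHom (σ : L ≃ₐ[K] L) :
    galRes K L σ = MulSemiringAction.toRingHom _ _ σ :=
  RingHom.ext fun x => Subtype.ext (algebraMap_galRestrict_apply (𝓞 K) σ x)

lemma asIdeal_smul (σ : L ≃ₐ[K] L) (v : HeightOneSpectrum (𝓞 L)) :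
    (σ • v).asIdeal = σ • v.asIdeal := by
  rw [smul_asIdeal, Ideal.pointwise_smul_eq_comap, galRes_eq_toRingHom]
  rfl

lemma exists_smul_eq_of_comap_eq {v w : HeightOneSpectrum (𝓞 L)}
    (h : v.asIdeal.comap (algebraMap (𝓞 K) (𝓞 L)) = w.asIdeal.comap (algebraMap (𝓞 K) (𝓞 L))) :
    ∃ σ : L ≃ₐ[K] L, σ • v = w := by
  obtain ⟨σ, hσ⟩ := Algebra.IsInvariant.exists_smul_of_under_eq (𝓞 K) (𝓞 L) (L ≃ₐ[K] L) _ _ h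
  exact ⟨σ, HeightOneSpectrum.ext (by rw [asIdeal_smul, hσ])⟩

lemma exists_smul_eq_of_liesAbove {P Q : PlaceOf L} {p : PlaceOf K}
    (hP : LiesAbove K L P p) (hQ : LiesAbove K L Q p) : ∃ σ : L ≃ₐ[K] L, σ • P = Q := by
  cases P <;> cases Q <;> cases p <;> simp only [LiesAbove] at hP hQ
  case inl.inl.inl w w' u =>
    obtain ⟨σ, hσ⟩ := InfinitePlace.exists_smul_eq_of_comap_eq (hP.trans hQ.symm)
    exact ⟨σ, congrArg Sum.inl hσ⟩
  case inr.inr.inr v v' q =>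
    obtain ⟨σ, hσ⟩ := exists_smul_eq_of_comap_eq K L (hP.trans hQ.symm)
    exact ⟨σ, congrArg Sum.inr hσ⟩

end TateNF

open TateNF in
theorem homology_X_generated_by_general
    (K L : Type) [Field K] [Field L] [NumberField K] [NumberField L]
    [Algebra K L] [IsGalois K L] [FiniteDimensional K L]
    (S : Finset (TateNF.PlaceOf K))
    -- for each `p ∈ S`, a fixed choice of a place `p(L)` of `L` above `p`
    (PL : ∀ p ∈ S, ↥(TateNF.SL K L S))
    (hPL : ∀ (p : TateNF.PlaceOf K) (hp : p ∈ S), TateNF.LiesAbove K L (PL p hp : TateNF.PlaceOf L) p)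
    -- a finite place `p0 ∈ S` whose decomposition group is all of `G`
    (p0 : TateNF.PlaceOf K) (hp0S : p0 ∈ S)
    (hp0full : TateNF.DecompGrp K L S (PL p0 hp0S) = ⊤)
    :
    AddSubgroup.closure
      {h : BarH1.H1 (L ≃ₐ[K] L) ↥(Xsub K L S) |
        ∃ (p : PlaceOf K) (hp : p ∈ S), p ≠ p0 ∧
          ∃ τ ∈ DecompGrp K L S (PL p hp),
            h = BarH1.H1mk (L ≃ₐ[K] L) ↥(Xsub K L S)
              (Finsupp.single τ (Xgen K L S (PL p hp) (PL p0 hp0S)))} = ⊤ := by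
  have hfixed (σ : L ≃ₐ[K] L) : σ • PL p0 hp0S = PL p0 hp0S :=
    Subtype.ext (show σ ∈ DecompGrp K L S (PL p0 hp0S) from hp0full ▸ Subgroup.mem_top σ)
  have hreps (P : SL K L S) : ∃ p : S, ∃ σ : L ≃ₐ[K] L, σ • PL p.1 p.2 = P := by
    obtain ⟨p, hp, hP⟩ := P.2
    obtain ⟨σ, hσ⟩ := exists_smul_eq_of_liesAbove K L (hPL p hp) hP
    exact ⟨⟨p, hp⟩, σ, Subtype.ext hσ⟩
  refine eq_top_iff.2 <| (closure_H1mk_stabilizerCycles_eq_top hfixed hreps).ge.trans <|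
    (AddSubgroup.closure_le _).2 ?_
  rintro _ ⟨_, ⟨⟨p, hp⟩, τ, hτ, rfl⟩, rfl⟩
  by_cases hp0 : p = p0
  · subst hp0
    rw [augmentationKernel.diff_self, Finsupp.single_zero, BarH1.H1mk_zero]
    exact zero_mem _
  · exact AddSubgroup.subset_closure ⟨p, hp, hp0, τ, congrArg Subtype.val hτ, rfl⟩

open TateNF in
theorem homology_X_generated_by
    (K L : Type) [Field K] [Field L] [NumberField K] [NumberField L]
    [Algebra K L] [IsGalois K L] [FiniteDimensional K L]
    (S : Finset (TateNF.PlaceOf K))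
    -- `S` contains all the infinite places of `K`
    (hSinf : ∀ w : NumberField.InfinitePlace K, Sum.inl w ∈ S)
    -- `S` contains all the finite places of `K` that ramify in `L/K`
    (hSram : ∀ (p : IsDedekindDomain.HeightOneSpectrum (NumberField.RingOfIntegers K))
      (P : IsDedekindDomain.HeightOneSpectrum (NumberField.RingOfIntegers L)),
      P.asIdeal.comap (algebraMap (NumberField.RingOfIntegers K) (NumberField.RingOfIntegers L))
          = p.asIdeal →
      1 < Ideal.ramificationIdx'
          p.asIdeal P.asIdeal →
      Sum.inr p ∈ S)
    -- for each `p ∈ S`, a fixed choice of a place `p(L)` of `L` above `p`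
    (PL : ∀ p ∈ S, ↥(TateNF.SL K L S))
    (hPL : ∀ (p : TateNF.PlaceOf K) (hp : p ∈ S), TateNF.LiesAbove K L (PL p hp : TateNF.PlaceOf L) p)
    -- a finite place `p0 ∈ S` whose decomposition group is all of `G`
    (p0 : TateNF.PlaceOf K) (hp0S : p0 ∈ S)
    (hp0fin : ∃ v : IsDedekindDomain.HeightOneSpectrum (NumberField.RingOfIntegers K),
      p0 = Sum.inr v)
    (hp0full : TateNF.DecompGrp K L S (PL p0 hp0S) = ⊤)
    :
    AddSubgroup.closure
      {h : BarH1.H1 (L ≃ₐ[K] L) ↥(Xsub K L S) |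
        ∃ (p : PlaceOf K) (hp : p ∈ S), p ≠ p0 ∧
          ∃ τ ∈ DecompGrp K L S (PL p hp),
            h = BarH1.H1mk (L ≃ₐ[K] L) ↥(Xsub K L S)
              (Finsupp.single τ (Xgen K L S (PL p hp) (PL p0 hp0S)))} = ⊤ :=
  homology_X_generated_by_general K L S PL hPL p0 hp0S hp0full
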